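/- If two proteins x and y are ortho-orthologs (l_P(lca_P({x,y})) = Spec), then the genes g(x) and g(y) are orthologs in G (l_G(lca_G({g(x),g(y)})) = Spec); and if x and y are para-orthologs (l_P(lca_P({x,y})) = Dup), then g(x) and g(y) are paralogs in G. -/
import Mathlib


inductive BTree (α : Type) : Type
  | leaf : α → BTree α
  | node : BTree α → BTree α → BTree α
deriving DecidableEq

namespace BTree

variable {α β : Type} [DecidableEq α] [DecidableEq β]

/-- The set of leaf labels of a tree. -/
def leaves : BTree α → Finset α
  | leaf a => {a}
  | node l r => leaves l ∪ leaves r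

/-- Number of leaves. -/
def leafCount : BTree α → ℕ
  | leaf _ => 1
  | node l r => leafCount l + leafCount r

/-- Number of internal nodes. -/
def internalCount : BTree α → ℕ
  | leaf _ => 0
  | node l r => internalCount l + internalCount r + 1

/-- The nodes of a tree, identified with the subtrees they root. -/
def nodes : BTree α → List (BTree α)
  | leaf a => [leaf a]
  | node l r => node l r :: (nodes l ++ nodes r)

/-- `Anc t u` : `u` is a node of (the subtree rooted at) `t`,
i.e. `t` is an ancestor of `u` (possibly `t = u`). -/
def Anc (t u : BTree α) : Prop := u ∈ nodes t

/-- All leaf labels are pairwise distinct. -/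
def distinctLeaves : BTree α → Prop
  | leaf _ => True
  | node l r => Disjoint (leaves l) (leaves r) ∧ distinctLeaves l ∧ distinctLeaves r

/-- The (subtree rooted at the) lowest common ancestor of a set `L` of leaf labels. -/
def lca : BTree α → Finset α → BTree α
  | leaf a, _ => leaf a
  | node l r, L =>
    if L ⊆ leaves l then lca l L
    else if L ⊆ leaves r then lca r L
    else node l r

/-- LCA-extension of a leaf map `s : α → β` : the image in the lower tree `S` of a node
`x` of the upper tree, namely the lca in `S` of the images of the leaves below `x`. -/
def mapLca (S : BTree β) (s : α → β) (x : BTree α) : BTree β :=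
  lca S ((leaves x).image s)

/-- Depth of the node `u` below the node `t` (number of edges on the path). -/
def depthOf : BTree α → BTree α → ℕ
  | leaf _, _ => 0
  | node l r, u =>
    if node l r = u then 0
    else if u ∈ nodes l then depthOf l u + 1 else depthOf r u + 1

inductive GLabel : Type
  | Spec | Dup
deriving DecidableEq

/-- LCA-reconciliation labeling of the nodes of a gene tree with respect to
a species tree `S` (internal nodes only; leaves get the dummy label `Spec`). -/
def glab (S : BTree β) (s : α → β) : BTree α → GLabel
  | leaf _ => GLabel.Spec
  | node l r =>
    if mapLca S s (node l r) ≠ mapLca S s l ∧ mapLca S s (node l r) ≠ mapLca S s r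
    then GLabel.Spec else GLabel.Dup

/-- Duplication cost `D(G,S)` : number of internal nodes labeled `Dup`. -/
def dupCost (S : BTree β) (s : α → β) : BTree α → ℕ
  | leaf _ => 0
  | node l r =>
    (if glab S s (node l r) = GLabel.Dup then 1 else 0) + dupCost S s l + dupCost S s r

/-- Losses induced on the edge from `x` to its child `y`. -/
def lossEdge (S : BTree β) (s : α → β) (x y : BTree α) : ℕ :=
  if mapLca S s x = mapLca S s y then 0
  else (depthOf (mapLca S s x) (mapLca S s y) - 1) +
    (if glab S s x = GLabel.Dup then 1 else 0)

/-- Loss cost `L(G,S)` : total number of losses induced on the edges of `G`. -/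
def lossCost (S : BTree β) (s : α → β) : BTree α → ℕ
  | leaf _ => 0
  | node l r =>
    lossEdge S s (node l r) l + lossEdge S s (node l r) r + lossCost S s l + lossCost S s r

inductive PLabel : Type
  | Spec | Dup | Creat
deriving DecidableEq

/-- LCA-reconciliation labeling of the nodes of a protein tree `P` with respect to a
gene tree `G` (with its own labeling `lG`); leaves get the dummy label `Creat`. -/
def plab (G : BTree β) (g : α → β) (lG : BTree β → GLabel) : BTree α → PLabel
  | leaf _ => PLabel.Creat
  | node l r =>
    if mapLca G g (node l r) ≠ mapLca G g l ∧ mapLca G g (node l r) ≠ mapLca G g r then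
      (match lG (mapLca G g (node l r)) with
        | GLabel.Spec => PLabel.Spec
        | GLabel.Dup => PLabel.Dup)
    else PLabel.Creat

/-- Creation cost `C(P,G)` : number of internal nodes of `P` labeled `Creat`. -/
def creatCost (G : BTree β) (g : α → β) (lG : BTree β → GLabel) : BTree α → ℕ
  | leaf _ => 0
  | node l r =>
    (if plab G g lG (node l r) = PLabel.Creat then 1 else 0) +
      creatCost G g lG l + creatCost G g lG r

/-- Protein losses induced on the edge from `x` to its child `y`. -/
def plossEdge (G : BTree β) (g : α → β) (lG : BTree β → GLabel) (x y : BTree α) : ℕ :=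
  if mapLca G g x = mapLca G g y then 0
  else (depthOf (mapLca G g x) (mapLca G g y) - 1) +
    (if plab G g lG x = PLabel.Creat then 1 else 0)

/-- Protein loss cost `L(P,G)`. -/
def plossCost (G : BTree β) (g : α → β) (lG : BTree β → GLabel) : BTree α → ℕ
  | leaf _ => 0
  | node l r =>
    plossEdge G g lG (node l r) l + plossEdge G g lG (node l r) r +
      plossCost G g lG l + plossCost G g lG r

/-- Relabel the leaves of a tree via `f` (e.g. `g(P)`). -/
def relabel (f : α → β) : BTree α → BTree β
  | leaf a => leaf (f a)
  | node l r => node (relabel f l) (relabel f r)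

theorem aux_mem_nodes_self (t : BTree α) : t ∈ t.nodes := by
  cases t <;> simp [nodes]

theorem aux_leaves_subset_of_mem_nodes {t u : BTree α} (h : u ∈ t.nodes) :
    u.leaves ⊆ t.leaves := by
  induction t with
  | leaf a => simp [nodes] at h; subst h; exact Finset.Subset.refl _
  | node l r ihl ihr =>
    simp only [nodes, List.mem_cons, List.mem_append] at h
    rcases h with h | h | h
    · subst h; exact Finset.Subset.refl _
    · exact (ihl h).trans Finset.subset_union_left
    · exact (ihr h).trans Finset.subset_union_right

theorem aux_distinct_of_mem_nodes {t u : BTree α} (ht : t.distinctLeaves)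
    (h : u ∈ t.nodes) : u.distinctLeaves := by
  induction t with
  | leaf a => simp [nodes] at h; subst h; trivial
  | node l r ihl ihr =>
    obtain ⟨hd, hl, hr⟩ := ht
    simp only [nodes, List.mem_cons, List.mem_append] at h
    rcases h with h | h | h
    · subst h; exact ⟨hd, hl, hr⟩
    · exact ihl hl h
    · exact ihr hr h

theorem aux_lca_mem_nodes (t : BTree α) (L : Finset α) : t.lca L ∈ t.nodes := by
  induction t with
  | leaf a => simp [lca, nodes]
  | node l r ihl ihr =>
    simp only [lca, nodes, List.mem_cons, List.mem_append]
    split_ifs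
    · exact Or.inr (Or.inl ihl)
    · exact Or.inr (Or.inr ihr)
    · exact Or.inl rfl

theorem aux_subset_leaves_lca {t : BTree α} {L : Finset α} (h : L ⊆ t.leaves) :
    L ⊆ (t.lca L).leaves := by
  induction t with
  | leaf a => simpa [lca] using h
  | node l r ihl ihr =>
    simp only [lca]
    split_ifs with h1 h2
    · exact ihl h1
    · exact ihr h2
    · exact h

theorem aux_lca_not_subset {t : BTree α} {L : Finset α} {l' r' : BTree α}
    (h : t.lca L = node l' r') : ¬ L ⊆ l'.leaves ∧ ¬ L ⊆ r'.leaves := by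
  induction t with
  | leaf a => simp [lca] at h
  | node l r ihl ihr =>
    simp only [lca] at h
    split_ifs at h with h1 h2
    · exact ihl h
    · exact ihr h
    · injection h with e1 e2; subst e1; subst e2; exact ⟨h1, h2⟩

theorem aux_lca_eq_of_mem_nodes {t u : BTree α} (ht : t.distinctLeaves)
    (hu : u ∈ t.nodes) {L : Finset α} (hL : L.Nonempty) (hsub : L ⊆ u.leaves) :
    t.lca L = u.lca L := by
  induction t with
  | leaf a => simp [nodes] at hu; subst hu; rfl
  | node l r ihl ihr =>
    obtain ⟨hd, hl, hr⟩ := ht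
    simp only [nodes, List.mem_cons, List.mem_append] at hu
    rcases hu with rfl | hu | hu
    · rfl
    · have hLl : L ⊆ l.leaves := hsub.trans (aux_leaves_subset_of_mem_nodes hu)
      simp only [lca, if_pos hLl]
      exact ihl hl hu
    · have hLr : L ⊆ r.leaves := hsub.trans (aux_leaves_subset_of_mem_nodes hu)
      have hnl : ¬ L ⊆ l.leaves := by
        intro hc
        obtain ⟨a, ha⟩ := hL
        exact (Finset.disjoint_left.mp hd (hc ha)) (hLr ha)
      simp only [lca, if_neg hnl, if_pos hLr]
      exact ihr hr hu

theorem aux_lca_pair_eq {G : BTree β} (hG : G.distinctLeaves) {Al Ar : Finset β}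
    (hAl : Al ⊆ G.leaves) (hAr : Ar ⊆ G.leaves)
    {a b : β} (ha : a ∈ Al) (hb : b ∈ Ar)
    (hnel : G.lca (Al ∪ Ar) ≠ G.lca Al) (hner : G.lca (Al ∪ Ar) ≠ G.lca Ar) :
    G.lca {a, b} = G.lca (Al ∪ Ar) := by
  have hA : Al ∪ Ar ⊆ G.leaves := Finset.union_subset hAl hAr
  have hAw : Al ∪ Ar ⊆ (G.lca (Al ∪ Ar)).leaves := aux_subset_leaves_lca hA
  have hwn : G.lca (Al ∪ Ar) ∈ G.nodes := aux_lca_mem_nodes _ _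
  have hwd : (G.lca (Al ∪ Ar)).distinctLeaves := aux_distinct_of_mem_nodes hG hwn
  rcases hwe : G.lca (Al ∪ Ar) with ⟨c⟩ | ⟨wl, wr⟩
  · -- leaf case: impossible
    rw [hwe] at hAw
    have hAlc : Al ⊆ (BTree.leaf c).leaves := (Finset.subset_union_left).trans hAw
    have h1 : G.lca Al = (BTree.leaf c).lca Al := by
      refine aux_lca_eq_of_mem_nodes hG ?_ ⟨a, ha⟩ hAlc
      rw [← hwe]; exact hwn
    have h2 : G.lca Al = BTree.leaf c := by rw [h1]; rfl
    exact absurd (hwe.trans h2.symm) hnel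
  · rw [hwe] at hAw hwn hwd hnel hner
    obtain ⟨hdisj, hdl, hdr⟩ := hwd
    obtain ⟨hnsl, hnsr⟩ := aux_lca_not_subset hwe
    have hAlw : Al ⊆ (BTree.node wl wr).leaves := (Finset.subset_union_left).trans hAw
    have hArw : Ar ⊆ (BTree.node wl wr).leaves := (Finset.subset_union_right).trans hAw
    have hlcal : G.lca Al = (BTree.node wl wr).lca Al :=
      aux_lca_eq_of_mem_nodes hG hwn ⟨a, ha⟩ hAlw
    have hlcar : G.lca Ar = (BTree.node wl wr).lca Ar :=
      aux_lca_eq_of_mem_nodes hG hwn ⟨b, hb⟩ hArw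
    have hAlside : Al ⊆ wl.leaves ∨ Al ⊆ wr.leaves := by
      by_contra hc
      push_neg at hc
      have : (BTree.node wl wr).lca Al = BTree.node wl wr := by
        simp [lca, if_neg hc.1, if_neg hc.2]
      exact hnel (this ▸ hlcal).symm
    have hArside : Ar ⊆ wl.leaves ∨ Ar ⊆ wr.leaves := by
      by_contra hc
      push_neg at hc
      have : (BTree.node wl wr).lca Ar = BTree.node wl wr := by
        simp [lca, if_neg hc.1, if_neg hc.2]
      exact hner (this ▸ hlcar).symm
    have hkey : (a ∈ wl.leaves ∧ b ∈ wr.leaves) ∨ (a ∈ wr.leaves ∧ b ∈ wl.leaves) := by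
      rcases hAlside with h1 | h1 <;> rcases hArside with h2 | h2
      · exact absurd (Finset.union_subset h1 h2) hnsl
      · exact Or.inl ⟨h1 ha, h2 hb⟩
      · exact Or.inr ⟨h1 ha, h2 hb⟩
      · exact absurd (Finset.union_subset h1 h2) hnsr
    have hpairsub : ({a, b} : Finset β) ⊆ (BTree.node wl wr).leaves := by
      intro c' hc'
      simp only [Finset.mem_insert, Finset.mem_singleton] at hc'
      rcases hc' with rfl | rfl
      · exact hAlw ha
      · exact hArw hb
    have hmain : G.lca {a, b} = (BTree.node wl wr).lca {a, b} :=
      aux_lca_eq_of_mem_nodes hG hwn ⟨a, Finset.mem_insert_self _ _⟩ hpairsub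
    have hamem : a ∈ ({a, b} : Finset β) := Finset.mem_insert_self _ _
    have hbmem : b ∈ ({a, b} : Finset β) := by simp
    have hnpl : ¬ ({a, b} : Finset β) ⊆ wl.leaves := by
      intro hc
      rcases hkey with ⟨h1, h2⟩ | ⟨h1, h2⟩
      · exact (Finset.disjoint_left.mp hdisj (hc hbmem)) h2
      · exact (Finset.disjoint_left.mp hdisj (hc hamem)) h1
    have hnpr : ¬ ({a, b} : Finset β) ⊆ wr.leaves := by
      intro hc
      rcases hkey with ⟨h1, h2⟩ | ⟨h1, h2⟩
      · exact (Finset.disjoint_left.mp hdisj h1) (hc hamem)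
      · exact (Finset.disjoint_left.mp hdisj h2) (hc hbmem)
    rw [hmain]
    simp [lca, if_neg hnpl, if_neg hnpr]

end BTree

open BTree in
/-- if proteins `x, y` are ortho-orthologs (their lca in `P` is labeled
`Spec`), then the genes `g x, g y` are orthologs in `G` (their lca in `G` is labeled
`Spec`); if `x, y` are para-orthologs (lca labeled `Dup`), then `g x, g y` are
paralogs in `G` (lca labeled `Dup`). Here the labeling of `G` is its
LCA-reconciliation with the species tree `S`. -/
theorem stmt12 {α β γ : Type} [DecidableEq α] [DecidableEq β] [DecidableEq γ]
    (S : BTree γ) (G : BTree β) (P : BTree α) (s : β → γ) (g : α → β)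
    (hP : P.distinctLeaves) (hG : G.distinctLeaves) (hS : S.distinctLeaves)
    (hg : ∀ a ∈ P.leaves, g a ∈ G.leaves) (hs : ∀ b ∈ G.leaves, s b ∈ S.leaves)
    (x y : α) (hx : x ∈ P.leaves) (hy : y ∈ P.leaves) (hxy : x ≠ y) :
    (plab G g (glab S s) (P.lca {x, y}) = PLabel.Spec →
        glab S s (G.lca {g x, g y}) = GLabel.Spec) ∧
    (plab G g (glab S s) (P.lca {x, y}) = PLabel.Dup →
        glab S s (G.lca {g x, g y}) = GLabel.Dup) := by
  classical
  have hsubP : ({x, y} : Finset α) ⊆ P.leaves := by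
    intro a ha
    simp only [Finset.mem_insert, Finset.mem_singleton] at ha
    rcases ha with rfl | rfl
    exacts [hx, hy]
  have hzn : P.lca {x, y} ∈ P.nodes := aux_lca_mem_nodes _ _
  have hzleaves : ({x, y} : Finset α) ⊆ (P.lca {x, y}).leaves := aux_subset_leaves_lca hsubP
  rcases hze : P.lca {x, y} with ⟨c⟩ | ⟨l, r⟩
  · rw [hze] at hzleaves
    exfalso
    have hxc : x = c := by simpa [leaves] using hzleaves (Finset.mem_insert_self _ _)
    have hymem : y ∈ ({x, y} : Finset α) := Finset.mem_insert_of_mem (Finset.mem_singleton_self _)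
    have hyc : y = c := by simpa [leaves] using hzleaves hymem
    exact hxy (hxc.trans hyc.symm)
  · rw [hze] at hzn hzleaves
    obtain ⟨hnl, hnr⟩ := aux_lca_not_subset hze
    have hxm : x ∈ l.leaves ∨ x ∈ r.leaves := by
      have := hzleaves (Finset.mem_insert_self _ _)
      simpa [leaves] using this
    have hymem : y ∈ ({x, y} : Finset α) := Finset.mem_insert_of_mem (Finset.mem_singleton_self _)
    have hym : y ∈ l.leaves ∨ y ∈ r.leaves := by
      have := hzleaves hymem
      simpa [leaves] using this
    have hpos : (x ∈ l.leaves ∧ y ∈ r.leaves) ∨ (x ∈ r.leaves ∧ y ∈ l.leaves) := by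
      rcases hxm with h1 | h1 <;> rcases hym with h2 | h2
      · refine absurd ?_ hnl
        intro a ha
        simp only [Finset.mem_insert, Finset.mem_singleton] at ha
        rcases ha with rfl | rfl
        exacts [h1, h2]
      · exact Or.inl ⟨h1, h2⟩
      · exact Or.inr ⟨h1, h2⟩
      · refine absurd ?_ hnr
        intro a ha
        simp only [Finset.mem_insert, Finset.mem_singleton] at ha
        rcases ha with rfl | rfl
        exacts [h1, h2]
    have hunion : (BTree.node l r).leaves ⊆ P.leaves := aux_leaves_subset_of_mem_nodes hzn
    have hlsub : l.leaves ⊆ P.leaves := fun a ha => hunion (by simp [leaves, ha])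
    have hrsub : r.leaves ⊆ P.leaves := fun a ha => hunion (by simp [leaves, ha])
    have hAl : (l.leaves.image g) ⊆ G.leaves := by
      intro b hb
      simp only [Finset.mem_image] at hb
      obtain ⟨a, ha, rfl⟩ := hb
      exact hg a (hlsub ha)
    have hAr : (r.leaves.image g) ⊆ G.leaves := by
      intro b hb
      simp only [Finset.mem_image] at hb
      obtain ⟨a, ha, rfl⟩ := hb
      exact hg a (hrsub ha)
    have himg : (BTree.node l r).leaves.image g = l.leaves.image g ∪ r.leaves.image g := by
      simp [leaves, Finset.image_union]
    by_cases hC : mapLca G g (BTree.node l r) ≠ mapLca G g l ∧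
        mapLca G g (BTree.node l r) ≠ mapLca G g r
    · have hCl := hC.1
      have hCr := hC.2
      simp only [mapLca, himg] at hCl hCr
      have key : G.lca {g x, g y} = mapLca G g (BTree.node l r) := by
        simp only [mapLca, himg]
        rcases hpos with ⟨h1, h2⟩ | ⟨h1, h2⟩
        · exact aux_lca_pair_eq hG hAl hAr (Finset.mem_image_of_mem g h1)
            (Finset.mem_image_of_mem g h2) hCl hCr
        · rw [Finset.pair_comm]
          exact aux_lca_pair_eq hG hAl hAr (Finset.mem_image_of_mem g h2)
            (Finset.mem_image_of_mem g h1) hCl hCr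
      constructor
      · intro h
        simp only [plab, if_pos hC] at h
        rw [key]
        rcases hgl : glab S s (mapLca G g (BTree.node l r))
        · rfl
        · exfalso
          rw [hgl] at h
          exact PLabel.noConfusion h
      · intro h
        simp only [plab, if_pos hC] at h
        rw [key]
        rcases hgl : glab S s (mapLca G g (BTree.node l r))
        · exfalso
          rw [hgl] at h
          exact PLabel.noConfusion h
        · rfl
    · have hcreat : plab G g (glab S s) (BTree.node l r) = PLabel.Creat := by
        simp only [plab, if_neg hC]
      constructor
      · intro h
        rw [hcreat] at h
        exact PLabel.noConfusion h
      · intro h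
        rw [hcreat] at h
        exact PLabel.noConfusion h
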